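/- arXiv:1207.2317 — 5 statements merged into one kernel-verified Lean document; each statement's English description precedes it below -/
import Mathlib

section
/- If T is a ŵ_p-shortest path tree from r (i.e., for every vertex v, the path T[r,v] is lexicographically minimal with respect to ŵ_p among all paths from r to v), then ρ(T,p) = ρ(p), where ρ(p) is the maximum of ρ(T',p) over all shortest path trees T' with respect to w_p. -/
/-- A directed graph: a type of edges with source and target maps. -/
structure Dgraph (V : Type) (E : Type) where
  src : E → V
  tgt : E → V

/-- `IsWalk G u v π`: the list of edges `π` forms a walk from `u` to `v` in `G`. -/
def IsWalk {V E : Type} (G : Dgraph V E) : V → V → List E → Prop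
  | u, v, [] => u = v
  | u, v, e :: es => G.src e = u ∧ IsWalk G (G.tgt e) v es

/-- A path is a walk without repeated edges. -/
def IsPath {V E : Type} (G : Dgraph V E) (u v : V) (π : List E) : Prop :=
  IsWalk G u v π ∧ π.Nodup

/-- Total weight of a list of edges under the weight function `w`. -/
def wval {E : Type} (w : E → ℝ) (π : List E) : ℝ := (π.map w).sum

/-- Total price of the priceable edges (those in `EP`) along `π`. -/
def pval {E : Type} [DecidableEq E] (p : E → ℝ) (EP : Finset E) (π : List E) : ℝ :=
  ((π.filter (· ∈ EP)).map p).sum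

/-- `χ(π) = Σ_{e_i ∈ π ∩ E_P} 2^{idx e_i}`. -/
def chival {E : Type} [DecidableEq E] (EP : Finset E) (idx : E → ℕ) (π : List E) : ℝ :=
  ((π.filter (· ∈ EP)).map (fun e => (2 : ℝ) ^ idx e)).sum

/-- The weight function `w_p`: price `p e` on priceable edges, fixed cost `c e` otherwise. -/
def wp {E : Type} [DecidableEq E] (c p : E → ℝ) (EP : Finset E) (e : E) : ℝ :=
  if e ∈ EP then p e else c e

/-- Strict lexicographic order on `ℝ × ℝ × ℝ`. -/
def lexLt (a b : ℝ × ℝ × ℝ) : Prop :=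
  a.1 < b.1 ∨ (a.1 = b.1 ∧ (a.2.1 < b.2.1 ∨ (a.2.1 = b.2.1 ∧ a.2.2 < b.2.2)))

/-- Non-strict lexicographic order on `ℝ × ℝ × ℝ`. -/
def lexLe (a b : ℝ × ℝ × ℝ) : Prop := lexLt a b ∨ a = b

/-- The composite weight `ŵ_p(π) = (w_p(π), -p(π), -χ(π))`. -/
def hatw {E : Type} [DecidableEq E] (c p : E → ℝ) (EP : Finset E) (idx : E → ℕ)
    (π : List E) : ℝ × ℝ × ℝ :=
  (wval (wp c p EP) π, -(pval p EP π), -(chival EP idx π))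

/-- `T` is a `ŵ_p`-shortest path tree from `r`: for every vertex `v`, `T v` is a path from
`r` to `v` that is lexicographically minimal with respect to `ŵ_p` among all such paths. -/
def IsHatSPT {V E : Type} [DecidableEq E] (G : Dgraph V E) (r : V)
    (c p : E → ℝ) (EP : Finset E) (idx : E → ℕ) (T : V → List E) : Prop :=
  ∀ v, IsPath G r v (T v) ∧
    ∀ π, IsPath G r v π → lexLe (hatw c p EP idx (T v)) (hatw c p EP idx π)

/-- `T` is a shortest path tree from `r` with respect to `w_p`. -/
def IsSPT {V E : Type} [DecidableEq E] (G : Dgraph V E) (r : V)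
    (c p : E → ℝ) (EP : Finset E) (T : V → List E) : Prop :=
  ∀ v, IsPath G r v (T v) ∧
    ∀ π, IsPath G r v π → wval (wp c p EP) (T v) ≤ wval (wp c p EP) π

/-- The last priceable edge along `π` (if any). -/
def lastP {E : Type} [DecidableEq E] (EP : Finset E) (π : List E) : Option E :=
  (π.filter (· ∈ EP)).getLast?

theorem lexLe.fst_le {a b : ℝ × ℝ × ℝ} (h : lexLe a b) : a.1 ≤ b.1 := by
  rcases h with (h | ⟨h, -⟩) | rfl
  · exact h.le
  · exact h.le
  · exact le_rfl

theorem lexLe.snd_le_of_fst_eq {a b : ℝ × ℝ × ℝ} (h : lexLe a b) (h₁ : a.1 = b.1) :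
    a.2.1 ≤ b.2.1 := by
  rcases h with (h | ⟨-, h | ⟨h, -⟩⟩) | rfl
  · exact absurd h₁ h.ne
  · exact h.le
  · exact h.le
  · exact le_rfl

section

variable {V E : Type} [DecidableEq E] {G : Dgraph V E} {r : V} {c p : E → ℝ} {EP : Finset E}
  {idx : E → ℕ} {T : V → List E}

theorem IsHatSPT.isSPT (hT : IsHatSPT G r c p EP idx T) : IsSPT G r c p EP T :=
  fun v => ⟨(hT v).1, fun π hπ => ((hT v).2 π hπ).fst_le⟩

theorem IsHatSPT.pval_le {T' : V → List E} (hT : IsHatSPT G r c p EP idx T)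
    (hT' : IsSPT G r c p EP T') (v : V) : pval p EP (T' v) ≤ pval p EP (T v) := by
  have hw : wval (wp c p EP) (T v) = wval (wp c p EP) (T' v) :=
    le_antisymm (hT.isSPT v |>.2 _ (hT' v).1) ((hT' v).2 _ (hT v).1)
  have h := ((hT v).2 _ (hT' v).1).snd_le_of_fst_eq hw
  simp only [hatw, neg_le_neg_iff] at h
  exact h

end

theorem stmt_3_general {V E : Type} [Fintype V] [DecidableEq E]
    (G : Dgraph V E) (r : V) (EP : Finset E) (c p : E → ℝ) (idx : E → ℕ)
    (φ : V → ℝ) (hφ : ∀ v, 0 ≤ φ v)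
    (T : V → List E) (hT : IsHatSPT G r c p EP idx T) :
    IsSPT G r c p EP T ∧
      ∀ T' : V → List E, IsSPT G r c p EP T' →
        ∑ v, φ v * pval p EP (T' v) ≤ ∑ v, φ v * pval p EP (T v) :=
  ⟨hT.isSPT, fun _ hT' =>
    Finset.sum_le_sum fun v _ => mul_le_mul_of_nonneg_left (hT.pval_le hT' v) (hφ v)⟩

/-- If `T` is a `ŵ_p`-shortest path tree from `r`, then `ρ(T,p) = ρ(p)`: `T` is a shortest
path tree for `w_p`, and its revenue `Σ_v φ(v)·p(T[r,v])` is maximal among all shortest path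
trees with respect to `w_p`. -/
theorem stmt_3 {V E : Type} [Fintype V] [DecidableEq E]
    (G : Dgraph V E) (r : V) (EP : Finset E) (c p : E → ℝ) (idx : E → ℕ)
    (φ : V → ℝ) (hφ : ∀ v, 0 ≤ φ v)
    (hc : ∀ e ∉ EP, 0 < c e) (hp : ∀ e ∈ EP, 0 < p e)
    (T : V → List E) (hT : IsHatSPT G r c p EP idx T) :
    IsSPT G r c p EP T ∧
      ∀ T' : V → List E, IsSPT G r c p EP T' →
        ∑ v, φ v * pval p EP (T' v) ≤ ∑ v, φ v * pval p EP (T v) :=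
  stmt_3_general G r EP c p idx φ hφ T hT
end

section
/- If T and T' are both ŵ_p-shortest path trees from r, then the reduced trees obtained by contracting all fixed-cost edges are equal: for any two priceable edges e_i, e_j, edge e_i is a descendant of e_j in T if and only if e_i is a descendant of e_j in T'. In particular, T and T' contain the same subset of priceable edges. -/
/-! Two `ŵ_p`-shortest paths to the same vertex have the same composite weight, in particular
the same `χ`. Since a path has no repeated edges and the exponents `idx e` are distinct on
priceable edges, `χ` is a sum of distinct powers of two, and binary representations are unique:
so `χ` determines the set of priceable edges on the path. -/

lemma lexLe_antisymm {a b : ℝ × ℝ × ℝ} (hab : lexLe a b) (hba : lexLe b a) : a = b := by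
  rcases hab with hab | rfl
  · rcases hba with hba | rfl
    · exfalso
      rcases hab with h | ⟨_, h | ⟨_, h⟩⟩ <;> rcases hba with h' | ⟨_, h' | ⟨_, h'⟩⟩ <;> linarith
    · rfl
  · rfl

lemma IsHatSPT.hatw_eq {V E : Type} [DecidableEq E] {G : Dgraph V E} {r : V} {c p : E → ℝ}
    {EP : Finset E} {idx : E → ℕ} {T T' : V → List E} (hT : IsHatSPT G r c p EP idx T)
    (hT' : IsHatSPT G r c p EP idx T') (v : V) :
    hatw c p EP idx (T v) = hatw c p EP idx (T' v) :=
  lexLe_antisymm ((hT v).2 _ (hT' v).1) ((hT' v).2 _ (hT v).1)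

section Chival

variable {E : Type} [DecidableEq E] {EP : Finset E} {idx : E → ℕ}

lemma chival_eq_sum_two_pow {π : List E} (hπ : π.Nodup) (hidx : Set.InjOn idx EP) :
    chival EP idx π = ((∑ n ∈ (π.filter (· ∈ EP)).toFinset.image idx, 2 ^ n : ℕ) : ℝ) := by
  have hinj : Set.InjOn idx (π.filter (· ∈ EP)).toFinset := fun a ha b hb =>
    hidx (of_decide_eq_true (List.mem_filter.mp (List.mem_toFinset.mp ha)).2)
      (of_decide_eq_true (List.mem_filter.mp (List.mem_toFinset.mp hb)).2)
  rw [chival, ← List.sum_toFinset _ (hπ.filter _), Finset.sum_image hinj]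
  push_cast
  rfl

lemma idx_mem_image_iff {π : List E} (hidx : Set.InjOn idx EP) {e : E} (he : e ∈ EP) :
    idx e ∈ (π.filter (· ∈ EP)).toFinset.image idx ↔ e ∈ π := by
  constructor
  · intro hmem
    obtain ⟨x, hx, hxe⟩ := Finset.mem_image.mp hmem
    simp only [List.mem_toFinset, List.mem_filter, decide_eq_true_eq] at hx
    exact hidx hx.2 he hxe ▸ hx.1
  · intro heπ
    exact Finset.mem_image_of_mem _ (by simp [heπ, he])

lemma mem_iff_mem_of_chival_eq {π π' : List E} (hπ : π.Nodup) (hπ' : π'.Nodup)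
    (hidx : Set.InjOn idx EP) (hχ : chival EP idx π = chival EP idx π') {e : E} (he : e ∈ EP) :
    e ∈ π ↔ e ∈ π' := by
  rw [chival_eq_sum_two_pow hπ hidx, chival_eq_sum_two_pow hπ' hidx, Nat.cast_inj] at hχ
  rw [← idx_mem_image_iff hidx he, ← idx_mem_image_iff hidx he,
    Finset.geomSum_injective le_rfl hχ]

end Chival

lemma IsHatSPT.mem_iff_mem {V E : Type} [DecidableEq E] {G : Dgraph V E} {r : V}
    {c p : E → ℝ} {EP : Finset E} {idx : E → ℕ} (hidx : Set.InjOn idx EP)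
    {T T' : V → List E} (hT : IsHatSPT G r c p EP idx T) (hT' : IsHatSPT G r c p EP idx T')
    (v : V) {e : E} (he : e ∈ EP) : e ∈ T v ↔ e ∈ T' v := by
  have hχ : chival EP idx (T v) = chival EP idx (T' v) :=
    neg_inj.mp (congrArg (fun x : ℝ × ℝ × ℝ => x.2.2) (hT.hatw_eq hT' v))
  exact mem_iff_mem_of_chival_eq (hT v).1.2 (hT' v).1.2 hidx hχ he

theorem stmt_5_general {V E : Type} [DecidableEq E]
    (G : Dgraph V E) (r : V) (EP : Finset E) (c p : E → ℝ) (idx : E → ℕ)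
    (hidx : ∀ e ∈ EP, ∀ e' ∈ EP, idx e = idx e' → e = e')
    (k : ℕ) (pe : Fin k → E)
    (hpe_mem : ∀ i, pe i ∈ EP)
    (T T' : V → List E)
    (hT : IsHatSPT G r c p EP idx T) (hT' : IsHatSPT G r c p EP idx T') :
    (∀ i j : Fin k,
        ((pe j ∈ T (G.src (pe i)) ∧ pe j ∈ T (G.tgt (pe i))) ↔
          (pe j ∈ T' (G.src (pe i)) ∧ pe j ∈ T' (G.tgt (pe i))))) ∧
      ∀ i : Fin k, (∃ v, pe i ∈ T v) ↔ (∃ v, pe i ∈ T' v) := by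
  have hmem v i := hT.mem_iff_mem hidx hT' v (hpe_mem i)
  exact ⟨fun i j => and_congr (hmem _ j) (hmem _ j), fun i => exists_congr (hmem · i)⟩

/-- If `T` and `T'` are both `ŵ_p`-shortest path trees from `r`, then their reduced trees
coincide: priceable edge `e_i` is a descendant of `e_j` in `T` (i.e. `e_j` lies on both
`T[r,s_i]` and `T[r,t_i]`) iff the same holds in `T'`; in particular `T` and `T'` contain
the same subset of priceable edges. -/
theorem stmt_5 {V E : Type} [DecidableEq E]
    (G : Dgraph V E) (r : V) (EP : Finset E) (c p : E → ℝ) (idx : E → ℕ)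
    (hc : ∀ e ∉ EP, 0 < c e) (hp : ∀ e ∈ EP, 0 < p e)
    (hidx : ∀ e ∈ EP, ∀ e' ∈ EP, idx e = idx e' → e = e')
    (k : ℕ) (pe : Fin k → E) (hpe_inj : Function.Injective pe)
    (hpe_mem : ∀ i, pe i ∈ EP)
    (T T' : V → List E)
    (hT : IsHatSPT G r c p EP idx T) (hT' : IsHatSPT G r c p EP idx T') :
    (∀ i j : Fin k,
        ((pe j ∈ T (G.src (pe i)) ∧ pe j ∈ T (G.tgt (pe i))) ↔
          (pe j ∈ T' (G.src (pe i)) ∧ pe j ∈ T' (G.tgt (pe i))))) ∧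
      ∀ i : Fin k, (∃ v, pe i ∈ T v) ↔ (∃ v, pe i ∈ T' v) :=
  stmt_5_general G r EP c p idx hidx k pe hpe_mem T T' hT hT'
end

section
/- Let T be a ŵ_p-shortest path tree in G, let G̃ be the model graph whose vertices are r and all endpoints s_1,t_1,...,s_k,t_k of priceable edges, with the priceable edges themselves, plus non-priceable edges from r to every other vertex and from each t_i to each s_j and t_j (j ≠ i) weighted by d_∞ (the distance in G − E_P). Let T̃ be a ŵ_p-shortest path tree in G̃. Then for every priceable edge e_i and endpoint x ∈ {s_i, t_i}, the set of priceable edges on the r-to-x path in T equals the set of priceable edges on the r-to-x path in T̃; consequently T and T̃ have the same reduced tree. -/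
/-- `u` reaches `v` in `G − E_P` (by a walk avoiding priceable edges). -/
def Reaches {V E : Type} (G : Dgraph V E) (EP : Finset E) (u v : V) : Prop :=
  ∃ π, IsWalk G u v π ∧ ∀ e ∈ π, e ∉ EP

/-- The model graph `G̃`: its edges are the priceable edges `e_1, …, e_k` together with
auxiliary edges given by ordered pairs of vertices. -/
def modelG {V E : Type} (G : Dgraph V E) (k : ℕ) (pe : Fin k → E) :
    Dgraph V (Fin k ⊕ (V × V)) where
  src := fun e => match e with | .inl i => G.src (pe i) | .inr q => q.1
  tgt := fun e => match e with | .inl i => G.tgt (pe i) | .inr q => q.2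

/-- The auxiliary edges actually present in the model graph: from `r` to any endpoint of a
priceable edge, and from each `t_i` to `s_j` and `t_j` for `j ≠ i`; only pairs connected in
`G − E_P` (finite `d_∞`) are present. -/
def allowedM {V E : Type} (G : Dgraph V E) (EP : Finset E) (r : V) (k : ℕ)
    (pe : Fin k → E) : Fin k ⊕ (V × V) → Prop
  | .inl _ => True
  | .inr q => Reaches G EP q.1 q.2 ∧
      ((q.1 = r ∧ ∃ j : Fin k, q.2 = G.src (pe j) ∨ q.2 = G.tgt (pe j)) ∨
        (∃ i j : Fin k, i ≠ j ∧ q.1 = G.tgt (pe i) ∧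
          (q.2 = G.src (pe j) ∨ q.2 = G.tgt (pe j))))

/-!
An `r`–`x` path of `G` projects to a walk of the model graph `G̃`: each stretch between
consecutive priceable edges becomes one auxiliary edge, whose cost `d_∞` is at most the cost of
the stretch, while the priceable edges, and with them `p` and `χ`, are kept. Conversely a walk
of `G̃` lifts to a walk of `G` of the same composite weight by expanding every auxiliary edge into
a shortest fixed-cost path. Shortcutting walks to paths never increases `ŵ_p`, so `T x` and
`T̃ x` have the same composite weight; in particular they have the same `χ`, and a sum of
distinct powers of two determines its exponents.

The model graph has no auxiliary edge from `t_m` back to `s_m` or `t_m`; the projection still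
works because a minimal path never makes such a detour after its last priceable edge.
-/

theorem isWalk_append {V E : Type} {G : Dgraph V E} {u v : V} {xs ys : List E} :
    IsWalk G u v (xs ++ ys) ↔ ∃ m, IsWalk G u m xs ∧ IsWalk G m v ys := by
  induction xs generalizing u with
  | nil => simp [IsWalk]
  | cons e es ih => simp [IsWalk, ih, and_assoc]

@[simp]
theorem isWalk_singleton {V E : Type} {G : Dgraph V E} {u v : V} {e : E} :
    IsWalk G u v [e] ↔ G.src e = u ∧ G.tgt e = v := by
  simp [IsWalk, eq_comm]

/-- Identifies `lexLe` with the order of the linearly ordered group `ℝ ×ₗ ℝ ×ₗ ℝ`. -/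
def toLex3 (a : ℝ × ℝ × ℝ) : ℝ ×ₗ ℝ ×ₗ ℝ := toLex (a.1, toLex a.2)

theorem toLex3_injective : Function.Injective toLex3 := by
  intro a b h
  simp only [toLex3, toLex_inj, Prod.ext_iff] at h
  exact Prod.ext h.1 (Prod.ext h.2.1 h.2.2)

theorem toLex3_add (a b : ℝ × ℝ × ℝ) : toLex3 (a + b) = toLex3 a + toLex3 b := rfl

theorem toLex3_zero : toLex3 0 = 0 := rfl

theorem lexLe_iff_toLex3_le {a b : ℝ × ℝ × ℝ} : lexLe a b ↔ toLex3 a ≤ toLex3 b := by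
  obtain ⟨a₁, a₂, a₃⟩ := a
  obtain ⟨b₁, b₂, b₃⟩ := b
  simp only [lexLe, lexLt, toLex3, Prod.Lex.toLex_le_toLex, Prod.mk.injEq]
  constructor
  · rintro ((h | ⟨rfl, h | ⟨rfl, h⟩⟩) | ⟨rfl, rfl, rfl⟩) <;> simp_all [le_of_lt]
  · rintro (h | ⟨rfl, h | ⟨rfl, h⟩⟩)
    · exact .inl (.inl h)
    · exact .inl (.inr ⟨rfl, .inl h⟩)
    · obtain h | rfl := h.lt_or_eq
      · exact .inl (.inr ⟨rfl, .inr ⟨rfl, h⟩⟩)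
      · exact .inr ⟨rfl, rfl, rfl⟩

theorem toLex3_le_toLex3_of_fst_le {a b : ℝ} (h : a ≤ b) :
    toLex3 (a, 0, 0) ≤ toLex3 (b, 0, 0) := by
  simp [toLex3, Prod.Lex.toLex_le_toLex, h.lt_or_eq]

theorem toLex3_pos_of_fst_pos {a : ℝ × ℝ × ℝ} (h : 0 < a.1) : 0 < toLex3 a :=
  Prod.Lex.toLex_lt_toLex.2 (.inl h)

section LexWeight

variable {E : Type} [DecidableEq E] (c p : E → ℝ) (EP : Finset E) (idx : E → ℕ)

def lexWeight (π : List E) : ℝ ×ₗ ℝ ×ₗ ℝ := toLex3 (hatw c p EP idx π)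

@[simp]
theorem lexWeight_nil : lexWeight c p EP idx [] = 0 := by
  simp [lexWeight, hatw, wval, pval, chival]; rfl

theorem lexWeight_append (π₁ π₂ : List E) :
    lexWeight c p EP idx (π₁ ++ π₂) = lexWeight c p EP idx π₁ + lexWeight c p EP idx π₂ := by
  rw [lexWeight, lexWeight, lexWeight, ← toLex3_add]
  congr 1
  simp only [hatw, wval, pval, chival, List.filter_append, List.map_append, List.sum_append,
    neg_add, Prod.mk_add_mk]

theorem lexWeight_cons (e : E) (π : List E) :
    lexWeight c p EP idx (e :: π) = lexWeight c p EP idx [e] + lexWeight c p EP idx π :=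
  lexWeight_append c p EP idx [e] π

theorem lexWeight_of_forall_notMem {π : List E} (h : ∀ e ∈ π, e ∉ EP) :
    lexWeight c p EP idx π = toLex3 (wval c π, 0, 0) := by
  have hfilter : π.filter (· ∈ EP) = [] := List.filter_eq_nil_iff.2 (by simpa using h)
  have hw : wval (wp c p EP) π = wval c π := by
    unfold wval
    exact congrArg List.sum (List.map_congr_left fun e he => if_neg (h e he))
  simp [lexWeight, hatw, pval, chival, hfilter, hw]

theorem lexWeight_singleton_of_mem {e : E} (he : e ∈ EP) :
    lexWeight c p EP idx [e] = toLex3 (p e, -p e, -2 ^ idx e) := by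
  simp [lexWeight, hatw, wval, pval, chival, wp, he]

theorem zero_lt_lexWeight {π : List E} (hpos : ∀ e ∈ π, 0 < wp c p EP e) (hne : π ≠ []) :
    0 < lexWeight c p EP idx π :=
  toLex3_pos_of_fst_pos (List.sum_pos _ (by simpa using hpos) (by simpa using hne))

theorem zero_le_lexWeight {π : List E} (h0 : ∀ e ∈ π, 0 ≤ wp c p EP e)
    (hp : ∀ e ∈ π, e ∈ EP → 0 < p e) : 0 ≤ lexWeight c p EP idx π := by
  have hsum : ∀ x ∈ π.map (wp c p EP), 0 ≤ x := by simpa using h0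
  by_cases hEP : ∃ e ∈ π, e ∈ EP
  · obtain ⟨e, he, heEP⟩ := hEP
    refine (toLex3_pos_of_fst_pos ?_).le
    calc 0 < wp c p EP e := by simpa [wp, heEP] using hp e he heEP
      _ ≤ wval (wp c p EP) π := List.single_le_sum hsum _ (List.mem_map_of_mem he)
  · push Not at hEP
    rw [lexWeight_of_forall_notMem c p EP idx hEP, ← toLex3_zero]
    refine toLex3_le_toLex3_of_fst_le ?_
    have hc : ∀ e ∈ π, 0 ≤ c e := fun e he => by simpa [wp, hEP e he] using h0 e he
    exact List.sum_nonneg (by simpa using hc)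

end LexWeight

theorem List.exists_eq_append_cons_append_cons_of_not_nodup {α : Type} :
    ∀ {l : List α}, ¬ l.Nodup → ∃ a e b c, l = a ++ (e :: b) ++ (e :: c)
  | [], h => absurd List.nodup_nil h
  | x :: xs, h => by
    by_cases hx : x ∈ xs
    · obtain ⟨b, c, rfl⟩ := List.append_of_mem hx
      exact ⟨[], x, b, c, rfl⟩
    · obtain ⟨a, e, b, c, rfl⟩ :=
        exists_eq_append_cons_append_cons_of_not_nodup fun hn => h (List.nodup_cons.2 ⟨hx, hn⟩)
      exact ⟨x :: a, e, b, c, rfl⟩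

section Paths

variable {V E : Type} [DecidableEq E] {G : Dgraph V E} {c p : E → ℝ} {EP : Finset E}
  {idx : E → ℕ}

/-- Cutting out a closed subwalk never increases `ŵ_p`: the cycle has non-negative weight, and
positive first component as soon as it contains a priceable edge. -/
theorem exists_isPath_subset_lexWeight_le {u v : V} {π : List E} (hπ : IsWalk G u v π)
    (h0 : ∀ e ∈ π, 0 ≤ wp c p EP e) (hp : ∀ e ∈ π, e ∈ EP → 0 < p e) :
    ∃ π', IsPath G u v π' ∧ π' ⊆ π ∧ lexWeight c p EP idx π' ≤ lexWeight c p EP idx π := by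
  induction hlen : π.length using Nat.strong_induction_on generalizing π with
  | _ n ih =>
  by_cases hnd : π.Nodup
  · exact ⟨π, ⟨hπ, hnd⟩, List.Subset.refl π, le_rfl⟩
  obtain ⟨a, e, b, c', rfl⟩ := List.exists_eq_append_cons_append_cons_of_not_nodup hnd
  obtain ⟨m, hab, hec⟩ := isWalk_append.1 hπ
  obtain ⟨m₁, ha, heb⟩ := isWalk_append.1 hab
  have hm : m₁ = m := heb.1.symm.trans hec.1
  have hshort : IsWalk G u v (a ++ e :: c') := isWalk_append.2 ⟨m, hm ▸ ha, hec⟩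
  have hsub : a ++ e :: c' ⊆ a ++ (e :: b) ++ (e :: c') := by
    intro x hx; simp only [List.mem_append, List.mem_cons] at hx ⊢; tauto
  obtain ⟨π', hπ', hsub', hle⟩ := ih _ (by simp [← hlen]) hshort
    (fun x hx => h0 x (hsub hx)) (fun x hx => hp x (hsub hx)) rfl
  refine ⟨π', hπ', fun x hx => hsub (hsub' hx), hle.trans ?_⟩
  have hcyc : e :: b ⊆ a ++ (e :: b) ++ (e :: c') := fun x hx =>
    List.mem_append_left _ (List.mem_append_right _ hx)
  have hcycle : 0 ≤ lexWeight c p EP idx (e :: b) :=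
    zero_le_lexWeight c p EP idx (fun x hx => h0 x (hcyc hx)) (fun x hx => hp x (hcyc hx))
  calc lexWeight c p EP idx (a ++ e :: c')
      ≤ lexWeight c p EP idx (a ++ e :: c') + lexWeight c p EP idx (e :: b) :=
        le_add_of_nonneg_right hcycle
    _ = lexWeight c p EP idx (a ++ (e :: b) ++ (e :: c')) := by
        simp only [lexWeight_append]; abel

theorem IsHatSPT.lexWeight_le {r v : V} {T : V → List E} (hT : IsHatSPT G r c p EP idx T)
    {π : List E} (hπ : IsPath G r v π) : lexWeight c p EP idx (T v) ≤ lexWeight c p EP idx π :=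
  lexLe_iff_toLex3_le.1 ((hT v).2 π hπ)

theorem IsHatSPT.eq_nil_of_eq_append {r x : V} {T : V → List E}
    (hT : IsHatSPT G r c p EP idx T) (hpos : ∀ e, 0 < wp c p EP e) {π₁ π₂ : List E}
    (h : T x = π₁ ++ π₂) (hπ₁ : IsWalk G r x π₁) : π₂ = [] := by
  by_contra hne
  have hnd : π₁.Nodup := ((hT x).1.2.sublist (h ▸ List.sublist_append_left π₁ π₂))
  have hle := hT.lexWeight_le ⟨hπ₁, hnd⟩
  rw [h, lexWeight_append] at hle
  exact (zero_lt_lexWeight c p EP idx (fun e _ => hpos e) hne).not_ge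
    (by simpa using hle)

end Paths

/-- `dInf` is the distance `d_∞` in `G − E_P`. -/
structure IsFixedCostDist {V E : Type} (G : Dgraph V E) (EP : Finset E) (c : E → ℝ)
    (dInf : V → V → ℝ) : Prop where
  le_wval : ∀ u v π, IsWalk G u v π → (∀ e ∈ π, e ∉ EP) → dInf u v ≤ wval c π
  exists_wval_eq : ∀ u v, Reaches G EP u v →
    ∃ π, IsWalk G u v π ∧ (∀ e ∈ π, e ∉ EP) ∧ wval c π = dInf u v

theorem IsFixedCostDist.nonneg {V E : Type} {G : Dgraph V E} {EP : Finset E} {c : E → ℝ}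
    {dInf : V → V → ℝ} (hd : IsFixedCostDist G EP c dInf) (hc : ∀ e ∉ EP, 0 < c e)
    {u v : V} (h : Reaches G EP u v) : 0 ≤ dInf u v := by
  obtain ⟨π, -, hfree, hπ⟩ := hd.exists_wval_eq u v h
  rw [← hπ]
  exact List.sum_nonneg (by simpa using fun e he => (hc e (hfree e he)).le)

/-- The weights of the model graph: the priceable edge `inl i` inherits price and index of
`pe i`, the auxiliary edge `inr (u, v)` costs `d_∞(u, v)`. -/
structure IsModelWeighting {V E : Type} {k : ℕ} (pe : Fin k → E) (p : E → ℝ) (idx : E → ℕ)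
    (dInf : V → V → ℝ) (cM pM : Fin k ⊕ (V × V) → ℝ) (EPM : Finset (Fin k ⊕ (V × V)))
    (idxM : Fin k ⊕ (V × V) → ℕ) : Prop where
  cM_inr : ∀ q : V × V, cM (.inr q) = dInf q.1 q.2
  pM_inl : ∀ i, pM (.inl i) = p (pe i)
  mem_EPM : ∀ e, e ∈ EPM ↔ ∃ i, e = .inl i
  idxM_inl : ∀ i, idxM (.inl i) = idx (pe i)

namespace IsModelWeighting

variable {V E : Type} {k : ℕ} {pe : Fin k → E} {EP : Finset E} {c p : E → ℝ} {idx : E → ℕ}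
  {dInf : V → V → ℝ} {cM pM : Fin k ⊕ (V × V) → ℝ} {EPM : Finset (Fin k ⊕ (V × V))}
  {idxM : Fin k ⊕ (V × V) → ℕ} (hM : IsModelWeighting pe p idx dInf cM pM EPM idxM)
include hM

theorem inl_mem (i : Fin k) : Sum.inl i ∈ EPM := (hM.mem_EPM _).2 ⟨i, rfl⟩

theorem inr_notMem (q : V × V) : Sum.inr q ∉ EPM := by simp [hM.mem_EPM]

theorem injOn_idxM (hidx : Set.InjOn idx EP) (hpe_inj : Function.Injective pe)
    (hpe_mem : ∀ i, pe i ∈ EP) : Set.InjOn idxM EPM := by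
  intro a ha b hb hab
  obtain ⟨i, rfl⟩ := (hM.mem_EPM a).1 ha
  obtain ⟨j, rfl⟩ := (hM.mem_EPM b).1 hb
  rw [hM.idxM_inl, hM.idxM_inl] at hab
  rw [hpe_inj (hidx (hpe_mem i) (hpe_mem j) hab)]

theorem pM_pos (hp : ∀ e ∈ EP, 0 < p e) (hpe_mem : ∀ i, pe i ∈ EP) {e : Fin k ⊕ (V × V)}
    (he : e ∈ EPM) : 0 < pM e := by
  obtain ⟨i, rfl⟩ := (hM.mem_EPM e).1 he
  exact hM.pM_inl i ▸ hp _ (hpe_mem i)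

variable [DecidableEq V]

theorem lexWeight_inr (q : V × V) :
    lexWeight cM pM EPM idxM [.inr q] = toLex3 (dInf q.1 q.2, 0, 0) := by
  rw [lexWeight_of_forall_notMem _ _ _ _ (by simpa using hM.inr_notMem q)]
  simp [wval, hM.cM_inr]

theorem wp_nonneg {G : Dgraph V E} {r : V} (hd : IsFixedCostDist G EP c dInf)
    (hc : ∀ e ∉ EP, 0 < c e) (hp : ∀ e ∈ EP, 0 < p e) (hpe_mem : ∀ i, pe i ∈ EP)
    {e : Fin k ⊕ (V × V)} (he : allowedM G EP r k pe e) : 0 ≤ wp cM pM EPM e := by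
  rcases e with i | q
  · simpa [wp, hM.inl_mem i, hM.pM_inl] using (hp _ (hpe_mem i)).le
  · simpa [wp, hM.inr_notMem q, hM.cM_inr] using hd.nonneg hc he.1

variable [DecidableEq E]

theorem lexWeight_inl (hpe_mem : ∀ i, pe i ∈ EP) (i : Fin k) :
    lexWeight cM pM EPM idxM [.inl i] = lexWeight c p EP idx [pe i] := by
  rw [lexWeight_singleton_of_mem _ _ _ _ (hM.inl_mem i),
    lexWeight_singleton_of_mem _ _ _ _ (hpe_mem i), hM.pM_inl, hM.idxM_inl]

end IsModelWeighting

section ModelGraph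

variable {V E : Type} {G : Dgraph V E} {r : V}
  {EP : Finset E} {c p : E → ℝ} {idx : E → ℕ} {k : ℕ} {pe : Fin k → E} {dInf : V → V → ℝ}
  {cM pM : Fin k ⊕ (V × V) → ℝ} {EPM : Finset (Fin k ⊕ (V × V))}
  {idxM : Fin k ⊕ (V × V) → ℕ}

/-- A jump out of `u` is allowed in the model graph as long as it does not go back to an
endpoint of the priceable edge just traversed. -/
theorem allowedM_inr_of_origin {u v : V} {pre : List E} {j : Fin k} (hpre : IsWalk G r u pre)
    (horig : pre = [] ∨ ∃ pre' m, pre = pre' ++ [pe m])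
    (hlast : ∀ pre' m, pre = pre' ++ [pe m] → m ≠ j)
    (hv : v = G.src (pe j) ∨ v = G.tgt (pe j)) (hreach : Reaches G EP u v) :
    allowedM G EP r k pe (.inr (u, v)) := by
  refine ⟨hreach, ?_⟩
  rcases horig with rfl | ⟨pre', m, rfl⟩
  · exact .inl ⟨hpre.symm, j, hv⟩
  · obtain ⟨_, -, -, hu⟩ := isWalk_append.1 hpre
    exact .inr ⟨m, j, hlast pre' m rfl, hu.symm, hv⟩

variable [DecidableEq V] [DecidableEq E]

theorem exists_walk_lexWeight_eq_of_modelEdge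
    (hM : IsModelWeighting pe p idx dInf cM pM EPM idxM)
    (hd : IsFixedCostDist G EP c dInf) (hpe_mem : ∀ i, pe i ∈ EP) (e : Fin k ⊕ (V × V))
    (hreach : ∀ q, e = .inr q → Reaches G EP q.1 q.2) :
    ∃ W, IsWalk G ((modelG G k pe).src e) ((modelG G k pe).tgt e) W ∧
      lexWeight c p EP idx W = lexWeight cM pM EPM idxM [e] := by
  rcases e with i | q
  · exact ⟨[pe i], by simp [modelG], (hM.lexWeight_inl hpe_mem i).symm⟩
  · obtain ⟨W, hW, hfree, hWc⟩ := hd.exists_wval_eq q.1 q.2 (hreach q rfl)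
    exact ⟨W, hW, by rw [hM.lexWeight_inr, lexWeight_of_forall_notMem _ _ _ _ hfree, hWc]⟩

theorem exists_walk_lexWeight_eq_of_modelWalk
    (hM : IsModelWeighting pe p idx dInf cM pM EPM idxM)
    (hd : IsFixedCostDist G EP c dInf) (hpe_mem : ∀ i, pe i ∈ EP) {x : V} :
    ∀ {σ : List (Fin k ⊕ (V × V))} {u : V}, IsWalk (modelG G k pe) u x σ →
      (∀ q, Sum.inr q ∈ σ → Reaches G EP q.1 q.2) →
      ∃ W, IsWalk G u x W ∧ lexWeight c p EP idx W = lexWeight cM pM EPM idxM σ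
  | [], _, hσ, _ => ⟨[], hσ, by simp⟩
  | e :: σ, _, ⟨rfl, hσ⟩, hreach => by
    obtain ⟨W₀, hW₀, hW₀eq⟩ := exists_walk_lexWeight_eq_of_modelEdge hM hd hpe_mem e
      (fun q hq => hreach q (hq ▸ List.mem_cons_self))
    obtain ⟨W, hW, hWeq⟩ := exists_walk_lexWeight_eq_of_modelWalk hM hd hpe_mem hσ
      (fun q hq => hreach q (List.mem_cons_of_mem e hq))
    exact ⟨W₀ ++ W, isWalk_append.2 ⟨_, hW₀, hW⟩,
      by rw [lexWeight_append, lexWeight_cons _ _ _ _ e, hW₀eq, hWeq]⟩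

theorem exists_modelWalk_lexWeight_le_of_forall_notMem
    (hM : IsModelWeighting pe p idx dInf cM pM EPM idxM)
    (hd : IsFixedCostDist G EP c dInf) {u v : V} {π : List E} (hπ : IsWalk G u v π)
    (hfree : ∀ e ∈ π, e ∉ EP) (hallow : π ≠ [] → allowedM G EP r k pe (.inr (u, v))) :
    ∃ σ, IsWalk (modelG G k pe) u v σ ∧ (∀ e ∈ σ, allowedM G EP r k pe e) ∧
      lexWeight cM pM EPM idxM σ ≤ lexWeight c p EP idx π := by
  rcases eq_or_ne π [] with rfl | hne
  · exact ⟨[], hπ, by simp, by simp⟩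
  refine ⟨[.inr (u, v)], by simp [modelG], by simpa using hallow hne, ?_⟩
  rw [hM.lexWeight_inr, lexWeight_of_forall_notMem _ _ _ _ hfree]
  exact toLex3_le_toLex3_of_fst_le (hd.le_wval u v π hπ hfree)

/-- Projection of the remainder `π` of a path `pre ++ π`, where `pre` (already projected) is
empty or ends with a priceable edge. -/
theorem exists_modelWalk_lexWeight_le
    (hM : IsModelWeighting pe p idx dInf cM pM EPM idxM) (hd : IsFixedCostDist G EP c dInf)
    (hpe_mem : ∀ i, pe i ∈ EP) (hpe_surj : ∀ e ∈ EP, ∃ i, pe i = e)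
    {x : V} {i₀ : Fin k} (hx : x = G.src (pe i₀) ∨ x = G.tgt (pe i₀))
    (π pre : List E) {u : V} (hpre : IsWalk G r u pre)
    (horig : pre = [] ∨ ∃ pre' m, pre = pre' ++ [pe m]) (hπ : IsWalk G u x π)
    (hnd : (pre ++ π).Nodup)
    (hmin : ∀ π₁ π₂, pre ++ π = π₁ ++ π₂ → IsWalk G r x π₁ → π₂ = []) :
    ∃ σ, IsWalk (modelG G k pe) u x σ ∧ (∀ e ∈ σ, allowedM G EP r k pe e) ∧
      lexWeight cM pM EPM idxM σ ≤ lexWeight c p EP idx π := by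
  induction hlen : π.length using Nat.strong_induction_on generalizing π pre u with
  | _ n ih =>
  cases hfind : π.find? (· ∈ EP) with
  | none =>
    have hfree : ∀ e ∈ π, e ∉ EP := by simpa using List.find?_eq_none.1 hfind
    refine exists_modelWalk_lexWeight_le_of_forall_notMem hM hd hπ hfree fun hne => ?_
    refine allowedM_inr_of_origin hpre horig ?_ hx ⟨π, hπ, hfree⟩
    -- Otherwise `pre ++ π` would already have reached `x` before its final stretch.
    rintro pre' m rfl rfl
    obtain ⟨s, hpre', hs, hu⟩ := isWalk_append.1 hpre
    rcases hx with rfl | rfl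
    · exact List.cons_ne_nil _ _ (hmin pre' (pe m :: π) (by simp) (hs ▸ hpre'))
    · exact hne (hmin _ π rfl (hu ▸ hpre))
  | some e =>
    obtain ⟨heEP, seg, rest, rfl, hseg⟩ := List.find?_eq_some_iff_append.1 hfind
    obtain ⟨m, rfl⟩ := hpe_surj e (by simpa using heEP)
    obtain ⟨s, hsegw, hs, hrest⟩ := isWalk_append.1 hπ
    have hpre₂ : IsWalk G r (G.tgt (pe m)) (pre ++ seg ++ [pe m]) :=
      isWalk_append.2 ⟨s, isWalk_append.2 ⟨u, hpre, hsegw⟩, by simpa using hs⟩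
    have hassoc : pre ++ seg ++ [pe m] ++ rest = pre ++ (seg ++ pe m :: rest) := by simp
    obtain ⟨σ', hσ', hσ'A, hσ'le⟩ := ih rest.length (by simp [← hlen]; omega) rest
      (pre ++ seg ++ [pe m]) hpre₂ (.inr ⟨_, m, rfl⟩) hrest (hassoc ▸ hnd)
      (hassoc ▸ hmin) rfl
    have hsegfree : ∀ e ∈ seg, e ∉ EP := by simpa using hseg
    have hfresh : ∀ pre' m', pre = pre' ++ [pe m'] → m' ≠ m := by
      rintro pre' m' rfl rfl
      exact List.disjoint_of_nodup_append hnd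
        (List.mem_append_right pre' (List.mem_singleton_self _))
        (List.mem_append_right seg List.mem_cons_self)
    obtain ⟨σ₀, hσ₀, hσ₀A, hσ₀le⟩ := exists_modelWalk_lexWeight_le_of_forall_notMem hM hd
      hsegw hsegfree fun _ => allowedM_inr_of_origin hpre horig hfresh (.inl hs.symm)
        ⟨seg, hsegw, hsegfree⟩
    refine ⟨σ₀ ++ .inl m :: σ', isWalk_append.2 ⟨s, hσ₀, hs, hσ'⟩, ?_, ?_⟩
    · simp only [List.mem_append, List.mem_cons]
      rintro e (he | rfl | he)
      exacts [hσ₀A e he, trivial, hσ'A e he]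
    · rw [lexWeight_append, lexWeight_append, lexWeight_cons, lexWeight_cons _ _ _ _ (pe m),
        hM.lexWeight_inl hpe_mem]
      exact add_le_add hσ₀le (add_le_add_right hσ'le _)

theorem lexWeight_tree_eq_modelTree
    (hc : ∀ e ∉ EP, 0 < c e) (hp : ∀ e ∈ EP, 0 < p e) (hpe_mem : ∀ i, pe i ∈ EP)
    (hpe_surj : ∀ e ∈ EP, ∃ i, pe i = e) (hd : IsFixedCostDist G EP c dInf)
    (hM : IsModelWeighting pe p idx dInf cM pM EPM idxM) {T : V → List E}
    (hT : IsHatSPT G r c p EP idx T) {x : V} {i : Fin k}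
    (hx : x = G.src (pe i) ∨ x = G.tgt (pe i)) {Tmx : List (Fin k ⊕ (V × V))}
    (hTmx : IsPath (modelG G k pe) r x Tmx) (hTmxA : ∀ e ∈ Tmx, allowedM G EP r k pe e)
    (hTmxMin : ∀ π, IsPath (modelG G k pe) r x π → (∀ e ∈ π, allowedM G EP r k pe e) →
      lexLe (hatw cM pM EPM idxM Tmx) (hatw cM pM EPM idxM π)) :
    lexWeight c p EP idx (T x) = lexWeight cM pM EPM idxM Tmx := by
  have hpos : ∀ e, 0 < wp c p EP e := fun e => by
    by_cases he : e ∈ EP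
    · simpa [wp, he] using hp e he
    · simpa [wp, he] using hc e he
  obtain ⟨σ, hσ, hσA, hσle⟩ := exists_modelWalk_lexWeight_le hM hd hpe_mem hpe_surj hx (T x) []
    rfl (.inl rfl) (hT x).1.1 (hT x).1.2 fun _ _ h h₁ => hT.eq_nil_of_eq_append hpos h h₁
  obtain ⟨σ', hσ'P, hσ'sub, hσ'le⟩ := exists_isPath_subset_lexWeight_le (idx := idxM) hσ
    (fun e he => hM.wp_nonneg hd hc hp hpe_mem (hσA e he)) fun e _ => hM.pM_pos hp hpe_mem
  obtain ⟨W, hW, hWeq⟩ := exists_walk_lexWeight_eq_of_modelWalk hM hd hpe_mem hTmx.1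
    fun q hq => (hTmxA _ hq).1
  obtain ⟨P, hP, -, hPle⟩ := exists_isPath_subset_lexWeight_le (idx := idx) hW
    (fun e _ => (hpos e).le) fun e _ => hp e
  apply le_antisymm
  · calc lexWeight c p EP idx (T x) ≤ lexWeight c p EP idx P := hT.lexWeight_le hP
      _ ≤ lexWeight c p EP idx W := hPle
      _ = lexWeight cM pM EPM idxM Tmx := hWeq
  · calc lexWeight cM pM EPM idxM Tmx ≤ lexWeight cM pM EPM idxM σ' :=
          lexLe_iff_toLex3_le.1 (hTmxMin σ' hσ'P fun e he => hσA e (hσ'sub he))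
      _ ≤ lexWeight cM pM EPM idxM σ := hσ'le
      _ ≤ lexWeight c p EP idx (T x) := hσle

end ModelGraph

section PriceIndices

variable {E : Type} [DecidableEq E] {EP : Finset E} {idx : E → ℕ}

def priceIdx (EP : Finset E) (idx : E → ℕ) (π : List E) : Finset ℕ :=
  ((π.filter (· ∈ EP)).map idx).toFinset

theorem mem_iff_idx_mem_priceIdx (hidx : Set.InjOn idx EP) {e : E} (he : e ∈ EP) (π : List E) :
    e ∈ π ↔ idx e ∈ priceIdx EP idx π := by
  simp only [priceIdx, List.mem_toFinset, List.mem_map, List.mem_filter, decide_eq_true_eq]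
  exact ⟨fun h => ⟨e, ⟨h, he⟩, rfl⟩, fun ⟨a, ⟨ha, haEP⟩, hae⟩ => hidx haEP he hae ▸ ha⟩

theorem chival_eq_sum_priceIdx (hidx : Set.InjOn idx EP) {π : List E} (hπ : π.Nodup) :
    chival EP idx π = ∑ n ∈ priceIdx EP idx π, (2 : ℝ) ^ n := by
  have hnd : ((π.filter (· ∈ EP)).map idx).Nodup :=
    (hπ.filter _).map_on fun a ha b hb => hidx (by simpa using (List.mem_filter.1 ha).2)
      (by simpa using (List.mem_filter.1 hb).2)
  rw [priceIdx, List.sum_toFinset _ hnd, List.map_map]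
  rfl

theorem priceIdx_eq_of_lexWeight_eq {E' : Type} [DecidableEq E'] {c p : E → ℝ}
    {c' p' : E' → ℝ} {EP' : Finset E'} {idx' : E' → ℕ} (hidx : Set.InjOn idx EP)
    (hidx' : Set.InjOn idx' EP') {π : List E} {π' : List E'} (hπ : π.Nodup) (hπ' : π'.Nodup)
    (h : lexWeight c p EP idx π = lexWeight c' p' EP' idx' π') :
    priceIdx EP idx π = priceIdx EP' idx' π' := by
  have hchi : chival EP idx π = chival EP' idx' π' :=
    neg_inj.1 (congrArg (fun a => a.2.2) (toLex3_injective h))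
  rw [chival_eq_sum_priceIdx hidx hπ, chival_eq_sum_priceIdx hidx' hπ'] at hchi
  exact Finset.geomSum_injective le_rfl (by exact_mod_cast hchi)

end PriceIndices

/-- Lemma (model graph): let `T` be a `ŵ_p`-shortest path tree in `G` and let `Tm` be a
`ŵ_p`-shortest path tree in the model graph `G̃` (whose non-priceable edges are weighted by
the distance `d_∞` in `G − E_P`, and whose paths are restricted to allowed edges).  Then for
every priceable edge `e_i` and endpoint `x ∈ {s_i, t_i}`, the priceable edges on the
`r`-to-`x` path of `T` coincide with those on the `r`-to-`x` path of `Tm`; consequently `T`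
and `Tm` have the same reduced tree (the descendant relations among priceable edges agree). -/
theorem stmt_13 {V E : Type} [DecidableEq V] [DecidableEq E]
    (G : Dgraph V E) (r : V) (EP : Finset E) (c p : E → ℝ) (idx : E → ℕ)
    (hc : ∀ e ∉ EP, 0 < c e) (hp : ∀ e ∈ EP, 0 < p e)
    (hidx : ∀ e ∈ EP, ∀ e' ∈ EP, idx e = idx e' → e = e')
    (k : ℕ) (pe : Fin k → E) (hpe_inj : Function.Injective pe)
    (hpe_mem : ∀ i, pe i ∈ EP) (hpe_surj : ∀ e ∈ EP, ∃ i, pe i = e)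
    (dInf : V → V → ℝ)
    (hd1 : ∀ u v π, IsWalk G u v π → (∀ e ∈ π, e ∉ EP) → dInf u v ≤ wval c π)
    (hd2 : ∀ u v, Reaches G EP u v →
      ∃ π, IsWalk G u v π ∧ (∀ e ∈ π, e ∉ EP) ∧ wval c π = dInf u v)
    (T : V → List E) (hT : IsHatSPT G r c p EP idx T)
    (cM pM : Fin k ⊕ (V × V) → ℝ)
    (hcM : ∀ q : V × V, cM (.inr q) = dInf q.1 q.2)
    (hpM : ∀ i : Fin k, pM (.inl i) = p (pe i))
    (EPM : Finset (Fin k ⊕ (V × V)))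
    (hEPM : ∀ e, e ∈ EPM ↔ ∃ i : Fin k, e = .inl i)
    (idxM : Fin k ⊕ (V × V) → ℕ)
    (hidxM : ∀ i : Fin k, idxM (.inl i) = idx (pe i))
    (Tm : V → List (Fin k ⊕ (V × V)))
    (hTm : ∀ x : V,
      (x = r ∨ ∃ i : Fin k, x = G.src (pe i) ∨ x = G.tgt (pe i)) →
        IsPath (modelG G k pe) r x (Tm x) ∧ (∀ e ∈ Tm x, allowedM G EP r k pe e) ∧
          ∀ π, IsPath (modelG G k pe) r x π → (∀ e ∈ π, allowedM G EP r k pe e) →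
            lexLe (hatw cM pM EPM idxM (Tm x)) (hatw cM pM EPM idxM π)) :
    (∀ i : Fin k, ∀ x : V, (x = G.src (pe i) ∨ x = G.tgt (pe i)) →
        ∀ j : Fin k, pe j ∈ T x ↔ Sum.inl j ∈ Tm x) ∧
      ∀ i j : Fin k,
        ((pe j ∈ T (G.src (pe i)) ∧ pe j ∈ T (G.tgt (pe i))) ↔
          (Sum.inl j ∈ Tm (G.src (pe i)) ∧ Sum.inl j ∈ Tm (G.tgt (pe i)))) := by
  have hinj : Set.InjOn idx EP := fun e he e' he' h => hidx e he e' he' h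
  have hd : IsFixedCostDist G EP c dInf := ⟨hd1, hd2⟩
  have hM : IsModelWeighting pe p idx dInf cM pM EPM idxM := ⟨hcM, hpM, hEPM, hidxM⟩
  have hinjM : Set.InjOn idxM EPM := hM.injOn_idxM hinj hpe_inj hpe_mem
  have hcore : ∀ i : Fin k, ∀ x : V, (x = G.src (pe i) ∨ x = G.tgt (pe i)) →
      ∀ j : Fin k, pe j ∈ T x ↔ Sum.inl j ∈ Tm x := by
    intro i x hx j
    obtain ⟨hTmx, hTmxA, hTmxMin⟩ := hTm x (.inr ⟨i, hx⟩)
    have hidxEq := priceIdx_eq_of_lexWeight_eq hinj hinjM (hT x).1.2 hTmx.2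
      (lexWeight_tree_eq_modelTree hc hp hpe_mem hpe_surj hd hM hT hx hTmx hTmxA hTmxMin)
    rw [mem_iff_idx_mem_priceIdx hinj (hpe_mem j), mem_iff_idx_mem_priceIdx hinjM (hM.inl_mem j),
      hidxEq, hM.idxM_inl]
  exact ⟨hcore, fun i j => and_congr (hcore i _ (.inl rfl) j) (hcore i _ (.inr rfl) j)⟩
end

section
/- If the price function p is generic, meaning there is a unique shortest path (with respect to w_p) from r to every vertex, then p is not optimal unless no shortest path from r uses a priceable edge: there exists a price function p' with ρ(p') > ρ(p) whenever some vertex v with φ(v) > 0 has its unique shortest path from r using at least one priceable edge. (Equivalently, any optimal price function with positive revenue is degenerate.) -/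
open Filter Topology

section PriceShift

variable {E : Type} [DecidableEq E] (c p : E → ℝ) (EP : Finset E) (ε : ℝ)

lemma wval_wp_add_const (π : List E) :
    wval (wp c (fun e => p e + ε) EP) π = wval (wp c p EP) π + ε * π.countP (· ∈ EP) := by
  induction π with
  | nil => simp [wval]
  | cons e π ih =>
    simp only [wval, List.map_cons, List.sum_cons, List.countP_cons] at ih ⊢
    by_cases he : e ∈ EP <;> simp [wp, he, ih] <;> ring

lemma pval_add_const (π : List E) :
    pval (fun e => p e + ε) EP π = pval p EP π + ε * π.countP (· ∈ EP) := by
  induction π with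
  | nil => simp [pval]
  | cons e π ih =>
    simp only [pval, List.filter_cons, List.countP_cons] at ih ⊢
    by_cases he : e ∈ EP <;> simp [he, ih]; ring

end PriceShift

lemma finite_setOf_isPath {V E : Type} [Fintype E] (G : Dgraph V E) (u v : V) :
    {π | IsPath G u v π}.Finite :=
  (Set.finite_coe_iff.1 (inferInstance : Finite {l : List E // l.Nodup})).subset fun _ h => h.2

section ShortestPathTrees

variable {V E : Type} [DecidableEq E] {G : Dgraph V E} {r : V} {c p : E → ℝ} {EP : Finset E}
  {T T₀ : V → List E}

lemma IsSPT.eq_of_forall_lt (hT : IsSPT G r c p EP T) (hT₀ : ∀ v, IsPath G r v (T₀ v))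
    (hlt : ∀ v π, IsPath G r v π → π ≠ T₀ v → wval (wp c p EP) (T₀ v) < wval (wp c p EP) π) :
    T = T₀ := by
  funext v
  by_contra hne
  exact (hlt v (T v) (hT v).1 hne).not_ge ((hT v).2 _ (hT₀ v))

lemma eventually_isSPT_add_const [Finite V] [Fintype E] (hT₀ : ∀ v, IsPath G r v (T₀ v))
    (hlt : ∀ v π, IsPath G r v π → π ≠ T₀ v → wval (wp c p EP) (T₀ v) < wval (wp c p EP) π) :
    ∀ᶠ ε in 𝓝 0, IsSPT G r c (fun e => p e + ε) EP T₀ := by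
  have hpath : ∀ v, ∀ π ∈ {π | IsPath G r v π}, ∀ᶠ ε in 𝓝 (0 : ℝ),
      wval (wp c (fun e => p e + ε) EP) (T₀ v) ≤ wval (wp c (fun e => p e + ε) EP) π := by
    intro v π hπ
    by_cases hne : π = T₀ v
    · exact .of_forall fun _ => hne ▸ le_rfl
    have hlim : ∀ σ : List E, Tendsto (fun ε : ℝ => wval (wp c p EP) σ + ε * σ.countP (· ∈ EP))
        (𝓝 0) (𝓝 (wval (wp c p EP) σ)) := fun σ => by
      simpa using tendsto_const_nhds.add ((tendsto_id (x := 𝓝 (0 : ℝ))).mul_const _)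
    filter_upwards [(hlim (T₀ v)).eventually_lt (hlim π) (hlt v π hπ hne)] with ε hε
    simpa only [wval_wp_add_const] using hε.le
  filter_upwards [eventually_all.2 fun v => (eventually_all_finite (finite_setOf_isPath G r v)).2
    (hpath v)] with ε hε v
  exact ⟨hT₀ v, hε v⟩

end ShortestPathTrees

lemma revenue_lt_revenue_add_const {V E : Type} [Fintype V] [DecidableEq E] (p : E → ℝ)
    (EP : Finset E) (φ : V → ℝ) (hφ : ∀ v, 0 ≤ φ v) (T : V → List E) {ε : ℝ} (hε : 0 < ε)
    (hv : ∃ v, 0 < φ v ∧ ∃ e ∈ T v, e ∈ EP) :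
    ∑ v, φ v * pval p EP (T v) < ∑ v, φ v * pval (fun e => p e + ε) EP (T v) := by
  obtain ⟨v, hφv, e, he, heP⟩ := hv
  simp only [pval_add_const, mul_add]
  refine Finset.sum_lt_sum (fun u _ => ?_) ⟨v, Finset.mem_univ _, ?_⟩
  · have := hφ u
    simp only [le_add_iff_nonneg_right]
    positivity
  · have : 0 < (T v).countP (· ∈ EP) := List.countP_pos_iff.2 ⟨e, he, by simpa using heP⟩
    simp only [lt_add_iff_pos_right]
    positivity

theorem stmt_14_general {V E : Type} [Fintype V] [Fintype E] [DecidableEq E]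
    (G : Dgraph V E) (r : V) (EP : Finset E) (c p : E → ℝ)
    (φ : V → ℝ) (hφ : ∀ v, 0 ≤ φ v)
    (hp : ∀ e ∈ EP, 0 < p e)
    (hgen : ∀ v : V, ∃ π, IsPath G r v π ∧
      (∀ π', IsPath G r v π' → wval (wp c p EP) π ≤ wval (wp c p EP) π') ∧
      (∀ π', IsPath G r v π' →
        wval (wp c p EP) π' = wval (wp c p EP) π → π' = π))
    (hv : ∃ v : V, 0 < φ v ∧ ∀ π, IsPath G r v π →
      (∀ π', IsPath G r v π' → wval (wp c p EP) π ≤ wval (wp c p EP) π') →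
      ∃ e ∈ π, e ∈ EP) :
    ∃ p' : E → ℝ, (∀ e ∈ EP, 0 < p' e) ∧
      ∃ T' : V → List E, IsSPT G r c p' EP T' ∧
        ∀ T : V → List E, IsSPT G r c p EP T →
          (∑ v, φ v * pval p EP (T v)) < ∑ v, φ v * pval p' EP (T' v) := by
  choose T₀ hpath hmin huniq using hgen
  have hlt : ∀ v π, IsPath G r v π → π ≠ T₀ v →
      wval (wp c p EP) (T₀ v) < wval (wp c p EP) π := fun v π hπ hne =>
    (hmin v π hπ).lt_of_ne fun h => hne (huniq v π hπ h.symm)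
  obtain ⟨ε, hT₀, hε⟩ := (((eventually_isSPT_add_const hpath hlt).filter_mono
    nhdsWithin_le_nhds).and (self_mem_nhdsWithin : ∀ᶠ ε in 𝓝[>] (0 : ℝ), 0 < ε)).exists
  refine ⟨fun e => p e + ε, fun e he => add_pos (hp e he) hε, T₀, hT₀, fun T hT => ?_⟩
  obtain ⟨v, hφv, hvP⟩ := hv
  rw [hT.eq_of_forall_lt hpath hlt]
  exact revenue_lt_revenue_add_const p EP φ hφ T₀ hε ⟨v, hφv, hvP _ (hpath v) (hmin v)⟩

/-- A generic price function (unique `w_p`-shortest path from `r` to every vertex) is not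
optimal when some vertex of positive demand uses a priceable edge on its (unique) shortest
path: there is a positive price function `p'` with `ρ(p') > ρ(p)`.  Here `ρ(p') > ρ(p)` is
expressed by exhibiting a shortest path tree for `p'` whose revenue exceeds the revenue of
every shortest path tree for `p`. -/
theorem stmt_14 {V E : Type} [Fintype V] [Fintype E] [DecidableEq E]
    (G : Dgraph V E) (r : V) (EP : Finset E) (c p : E → ℝ)
    (φ : V → ℝ) (hφ : ∀ v, 0 ≤ φ v)
    (hc : ∀ e ∉ EP, 0 < c e) (hp : ∀ e ∈ EP, 0 < p e)
    (hgen : ∀ v : V, ∃ π, IsPath G r v π ∧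
      (∀ π', IsPath G r v π' → wval (wp c p EP) π ≤ wval (wp c p EP) π') ∧
      (∀ π', IsPath G r v π' →
        wval (wp c p EP) π' = wval (wp c p EP) π → π' = π))
    (hv : ∃ v : V, 0 < φ v ∧ ∀ π, IsPath G r v π →
      (∀ π', IsPath G r v π' → wval (wp c p EP) π ≤ wval (wp c p EP) π') →
      ∃ e ∈ π, e ∈ EP) :
    ∃ p' : E → ℝ, (∀ e ∈ EP, 0 < p' e) ∧
      ∃ T' : V → List E, IsSPT G r c p' EP T' ∧
        ∀ T : V → List E, IsSPT G r c p EP T →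
          (∑ v, φ v * pval p EP (T v)) < ∑ v, φ v * pval p' EP (T' v) :=
  stmt_14_general G r EP c p φ hφ hp hgen hv
end

section
/- Suppose T is a ŵ_p-shortest path tree and T* is any shortest path tree with respect to w_p. Then for every vertex v, p(T[r,v]) ≥ p(T*[r,v]); that is, among all shortest path trees, a lexicographically shortest tree maximizes the revenue of the leader on every root-to-vertex path simultaneously. -/
theorem lexLe.snd_le_of_fst_le {a b : ℝ × ℝ × ℝ} (h : lexLe a b) (hfst : b.1 ≤ a.1) :
    a.2.1 ≤ b.2.1 := by
  rcases h with (hlt | ⟨_, hlt | ⟨heq, _⟩⟩) | rfl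
  · exact absurd hfst (not_le.mpr hlt)
  · exact hlt.le
  · exact heq.le
  · exact le_rfl

theorem stmt_17_general {V E : Type} [DecidableEq E]
    (G : Dgraph V E) (r : V) (EP : Finset E) (c p : E → ℝ) (idx : E → ℕ)
    (T Tstar : V → List E)
    (hT : IsHatSPT G r c p EP idx T) (hTstar : IsSPT G r c p EP Tstar) :
    ∀ v : V, pval p EP (Tstar v) ≤ pval p EP (T v) := by
  intro v
  have hw : wval (wp c p EP) (Tstar v) ≤ wval (wp c p EP) (T v) :=
    (hTstar v).2 _ (hT v).1
  have hlex := ((hT v).2 _ (hTstar v).1).snd_le_of_fst_le hw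
  simpa only [hatw, neg_le_neg_iff] using hlex

/-- If `T` is a `ŵ_p`-shortest path tree and `T*` is any shortest path tree with respect to
`w_p`, then `p(T[r,v]) ≥ p(T*[r,v])` for every vertex `v`: a lexicographically shortest
tree simultaneously maximizes the leader's revenue on every root-to-vertex path. -/
theorem stmt_17 {V E : Type} [DecidableEq E]
    (G : Dgraph V E) (r : V) (EP : Finset E) (c p : E → ℝ) (idx : E → ℕ)
    (hc : ∀ e ∉ EP, 0 < c e) (hp : ∀ e ∈ EP, 0 < p e)
    (T Tstar : V → List E)
    (hT : IsHatSPT G r c p EP idx T) (hTstar : IsSPT G r c p EP Tstar) :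
    ∀ v : V, pval p EP (Tstar v) ≤ pval p EP (T v) :=
  stmt_17_general G r EP c p idx T Tstar hT hTstar
end
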